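/- arXiv:1008.1296 — 4 statements merged into one kernel-verified Lean document; each statement's English description precedes it below -/
import Mathlib

section
/- For any negative integer D, there are only finitely many reduced primitive positive definite binary quadratic forms of discriminant D. -/
theorem stmt_3 (D : ℤ) (hD : D < 0) :
    {f : ℤ × ℤ × ℤ |
      Int.gcd f.1 (Int.gcd f.2.1 f.2.2) = 1 ∧ 0 < f.1 ∧
      f.2.1 ^ 2 - 4 * f.1 * f.2.2 = D ∧
      |f.2.1| ≤ f.1 ∧ f.1 ≤ f.2.2 ∧
      ((|f.2.1| = f.1 ∨ f.1 = f.2.2) → 0 ≤ f.2.1)}.Finite := by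
  apply Set.Finite.subset
    (((Set.finite_Icc (1:ℤ) (-D)).prod ((Set.finite_Icc D (-D)).prod (Set.finite_Icc 1 (-D)))))
  rintro ⟨a, b, c⟩ ⟨-, ha, hdisc, hb, hac, -⟩
  have hb1 : -a ≤ b ∧ b ≤ a := abs_le.mp hb
  have hbsq : b ^ 2 ≤ a ^ 2 := sq_le_sq' hb1.1 hb1.2
  have h3 : 3 * (a * c) ≤ -D := by nlinarith [mul_pos ha (lt_of_lt_of_le ha hac)]
  refine ⟨⟨ha, ?_⟩, ⟨?_, ?_⟩, ⟨lt_of_lt_of_le ha hac, ?_⟩⟩ <;>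
    nlinarith [mul_pos ha (lt_of_lt_of_le ha hac)]
end

section
/- Let m be a positive integer with m ≡ 7 (mod 12) all of whose prime divisors are congruent to 1 or 7 mod 12. Then the number of pairs of coprime integers (x,y) with m = 3x² + 4y² is 2^{τ(m)+1}, where τ(m) is the number of distinct prime divisors of m. -/
/-!
Write `ℤ[ω]` for the Eisenstein integers, with norm `N(a + bω) = a² - ab + b²`. The solutions
`(x, y)` of `m = 3x² + 4y²` with `x, y` coprime correspond to the primitive `z = a + bω` (that is,
`a` and `b` coprime) of norm `m` with `b` even, through `z = (x + 2y) + 2xω`. Multiplication by the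
unit `ω` cycles the primitive elements of norm `m` through the three parity classes "`b` even",
"`a` even" and "`a - b` even", so the solutions make up a third of them.

`ℤ[ω]` is norm-Euclidean, and a prime `p ≡ 1 (mod 3)` splits as `p = π π̄` into two non-associate
primes. A primitive element of norm `p m` is divisible by exactly one of `π` and `π̄`, and
`α ↦ π α` maps the primitive elements of norm `m` that are not divisible by `π̄` bijectively onto
the primitive elements of norm `p m` divisible by `π`. So the number of primitive elements of
norm `m` doubles with each new prime factor of `m` and does not change with a repeated one.
Starting from the six units, there are `6 · 2^τ(m)` of them, hence `2^(τ(m) + 1)` solutions.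
-/

open QuadraticAlgebra

theorem Set.ncard_sep_add_ncard_sep_not {α : Type*} {s : Set α} (hs : s.Finite) (P : α → Prop) :
    {x ∈ s | P x}.ncard + {x ∈ s | ¬ P x}.ncard = s.ncard :=
  Set.ncard_inter_add_ncard_sdiff_eq_ncard s {x | P x} hs

theorem Nat.card_primeFactors_prime_mul {p m : ℕ} (hp : p.Prime) (hm : m ≠ 0) :
    (p * m).primeFactors.card =
      if p ∣ m then m.primeFactors.card else m.primeFactors.card + 1 := by
  rw [Nat.primeFactors_mul hp.ne_zero hm, hp.primeFactors, Finset.singleton_union]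
  split_ifs with hpm
  · rw [Finset.insert_eq_of_mem ((Nat.mem_primeFactors_of_ne_zero hm).2 ⟨hp, hpm⟩)]
  · rw [Finset.card_insert_of_notMem fun h => hpm (Nat.dvd_of_mem_primeFactors h)]

theorem Nat.Prime.exists_dvd_sq_add_self_add_one {p : ℕ} (hp : p.Prime) (hp3 : p % 3 = 1) :
    ∃ t : ℤ, (p : ℤ) ∣ t ^ 2 + t + 1 := by
  have := Fact.mk hp
  have h3 : 3 ∣ Fintype.card (ZMod p)ˣ := by
    rw [ZMod.card_units_eq_totient, Nat.totient_prime hp]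
    omega
  -- a unit `u` of order `3` is a root of `X ^ 3 - 1 = (X - 1) (X ^ 2 + X + 1)` other than `1`
  obtain ⟨u, hu⟩ := exists_prime_orderOf_dvd_card 3 h3
  have hu3 : (u : ZMod p) ^ 3 = 1 := by
    rw [← Units.val_pow_eq_pow_val, ← hu, pow_orderOf_eq_one, Units.val_one]
  have hu1 : (u : ZMod p) - 1 ≠ 0 := by
    rw [sub_ne_zero, Ne, Units.val_eq_one]
    rintro rfl
    simp at hu
  refine ⟨(u : ZMod p).val, ?_⟩
  rw [← ZMod.intCast_zmod_eq_zero_iff_dvd]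
  push_cast
  rw [ZMod.natCast_val, ZMod.cast_id]
  exact eq_zero_of_ne_zero_of_mul_left_eq_zero hu1 (by linear_combination hu3)

theorem Int.isCoprime_add_two_mul_two_mul_iff {x y : ℤ} (hx : Odd x) :
    IsCoprime (x + 2 * y) (2 * x) ↔ IsCoprime x y := by
  obtain ⟨k, rfl⟩ := hx
  refine ⟨fun ⟨c, d, h⟩ => ⟨c + 2 * d, 2 * c, by linear_combination h⟩, fun h => ?_⟩
  have h2 : IsCoprime (2 : ℤ) (2 * k + 1) := ⟨-k, 1, by ring⟩
  refine IsCoprime.mul_right ⟨1, -(k + y), by ring⟩ ?_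
  rw [add_comm, ← IsCoprime.add_mul_left_left_iff (z := -1),
    show 2 * y + (2 * k + 1) + (2 * k + 1) * -1 = 2 * y by ring]
  exact h2.mul_left h.symm

theorem QuadraticAlgebra.irreducible_of_irreducible_norm {R : Type*} [CommRing R] {a b : R}
    {z : QuadraticAlgebra R a b} (h : Irreducible z.norm) : Irreducible z where
  not_isUnit hz := h.not_isUnit (isUnit_iff_norm_isUnit.mp hz)
  isUnit_or_isUnit {x y} hz := by
    simpa only [isUnit_iff_norm_isUnit] using h.isUnit_or_isUnit (by rw [hz, map_mul])

/-- `ω ^ 2 = -1 - ω`, so `ω` is a primitive cube root of unity and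
`z.norm = z.re ^ 2 - z.re * z.im + z.im ^ 2`. -/
abbrev EisensteinInt := QuadraticAlgebra ℤ (-1) (-1)

notation "ℤ[ω]" => EisensteinInt

namespace EisensteinInt

theorem four_mul_norm (z : ℤ[ω]) : 4 * z.norm = (2 * z.re - z.im) ^ 2 + 3 * z.im ^ 2 := by
  rw [norm_def]
  ring

theorem norm_nonneg (z : ℤ[ω]) : 0 ≤ z.norm := by
  nlinarith [four_mul_norm z, sq_nonneg (2 * z.re - z.im), sq_nonneg z.im]

theorem norm_eq_zero_iff {z : ℤ[ω]} : z.norm = 0 ↔ z = 0 := by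
  refine ⟨fun h => ?_, fun h => h ▸ QuadraticAlgebra.norm_zero⟩
  have hsum := four_mul_norm z
  have him : z.im = 0 := by nlinarith [sq_nonneg (2 * z.re - z.im), sq_nonneg z.im]
  rw [him] at hsum
  have hre : z.re = 0 := by nlinarith [sq_nonneg z.re]
  ext <;> assumption

theorem norm_pos {z : ℤ[ω]} : 0 < z.norm ↔ z ≠ 0 := by
  rw [(norm_nonneg z).lt_iff_ne', Ne, norm_eq_zero_iff]

theorem isUnit_iff_norm_eq_one {z : ℤ[ω]} : IsUnit z ↔ z.norm = 1 := by
  rw [isUnit_iff_norm_isUnit, Int.isUnit_iff]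
  have := norm_nonneg z
  omega

theorem mul_star_eq_norm (z : ℤ[ω]) : z * star z = z.norm := by
  rw [← algebraMap_norm_eq_mul_star]
  rfl

theorem intCast_dvd_iff {n : ℤ} {z : ℤ[ω]} : (n : ℤ[ω]) ∣ z ↔ n ∣ z.re ∧ n ∣ z.im := by
  rw [← eq_intCast (algebraMap ℤ ℤ[ω]), algebraMap_dvd_iff]

theorem star_dvd_star {x y : ℤ[ω]} (h : x ∣ y) : star x ∣ star y := by
  simpa only [starRingEnd_apply] using map_dvd (starRingEnd ℤ[ω]) h

/-- The integer nearest to `w / n` when `0 < n`, and `0` when `n = 0`. -/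
def roundDiv (w n : ℤ) : ℤ := (2 * w + n) / (2 * n)

theorem abs_two_mul_sub_mul_roundDiv_le (w : ℤ) {n : ℤ} (hn : 0 < n) :
    |2 * (w - n * roundDiv w n)| ≤ n := by
  have h := Int.emod_add_mul_ediv (2 * w + n) (2 * n)
  have h0 := Int.emod_nonneg (2 * w + n) (by omega : 2 * n ≠ 0)
  have h1 := Int.emod_lt_of_pos (2 * w + n) (by omega : 0 < 2 * n)
  rw [roundDiv, abs_le]
  constructor <;> linarith

/-- `x / y = x * star y / y.norm`, rounded coordinatewise. -/
def quotNearest (x y : ℤ[ω]) : ℤ[ω] :=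
  ⟨roundDiv (x * star y).re y.norm, roundDiv (x * star y).im y.norm⟩

theorem norm_sub_mul_quotNearest_lt (x : ℤ[ω]) {y : ℤ[ω]} (hy : y ≠ 0) :
    (x - y * quotNearest x y).norm < y.norm := by
  have hn : 0 < y.norm := norm_pos.2 hy
  -- `(x - y q) * star y` is the error of rounding `x * star y` to a multiple of `y.norm`,
  -- whose coordinates are at most `y.norm / 2` in absolute value
  set e : ℤ[ω] := x * star y - y.norm * quotNearest x y
  have he : (x - y * quotNearest x y) * star y = e := by
    rw [sub_mul, mul_right_comm, mul_star_eq_norm]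
  have hre : e.re = (x * star y).re - y.norm * roundDiv (x * star y).re y.norm := by
    simp [e, quotNearest]
  have him : e.im = (x * star y).im - y.norm * roundDiv (x * star y).im y.norm := by
    simp [e, quotNearest]
  have hre' := abs_le.1 (abs_two_mul_sub_mul_roundDiv_le (x * star y).re hn)
  have him' := abs_le.1 (abs_two_mul_sub_mul_roundDiv_le (x * star y).im hn)
  have hnorm_e : 4 * e.norm ≤ 3 * y.norm ^ 2 := by
    rw [norm_def]
    nlinarith
  have : (x - y * quotNearest x y).norm * y.norm = e.norm := by
    rw [← he, map_mul, QuadraticAlgebra.norm_star]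
  nlinarith [norm_nonneg (x - y * quotNearest x y)]

theorem natAbs_norm_le_natAbs_norm_mul (x : ℤ[ω]) {y : ℤ[ω]} (hy : y ≠ 0) :
    x.norm.natAbs ≤ (x * y).norm.natAbs := by
  rw [map_mul, Int.natAbs_mul]
  exact Nat.le_mul_of_pos_right _ (Int.natAbs_pos.2 (norm_pos.2 hy).ne')

instance : EuclideanDomain ℤ[ω] where
  quotient := quotNearest
  quotient_zero x := by ext <;> simp [quotNearest, roundDiv]
  remainder x y := x - y * quotNearest x y
  quotient_mul_add_remainder_eq x y := add_sub_cancel _ _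
  r := InvImage (· < ·) fun z => z.norm.natAbs
  r_wellFounded := (measure fun z : ℤ[ω] => z.norm.natAbs).wf
  remainder_lt x y hy := by
    have := norm_sub_mul_quotNearest_lt x hy
    have := norm_nonneg (x - y * quotNearest x y)
    show Int.natAbs _ < Int.natAbs _
    omega
  mul_left_not_lt x y hy := (natAbs_norm_le_natAbs_norm_mul x hy).not_gt

theorem ne_zero_of_norm_eq_prime {π : ℤ[ω]} {p : ℕ} (hp : p.Prime) (hπ : π.norm = p) : π ≠ 0 :=
  norm_pos.1 (by rw [hπ]; exact_mod_cast hp.pos)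

theorem prime_of_norm_eq_prime {π : ℤ[ω]} {p : ℕ} (hp : p.Prime) (hπ : π.norm = p) :
    Prime π :=
  (irreducible_of_irreducible_norm (hπ ▸ (Nat.prime_iff_prime_int.mp hp).irreducible)).prime

theorem exists_norm_eq_of_not_irreducible {p : ℕ} (hp : p.Prime)
    (hirr : ¬ Irreducible (p : ℤ[ω])) : ∃ π : ℤ[ω], π.norm = p := by
  have hunit : ¬ IsUnit (p : ℤ[ω]) := by
    rw [isUnit_iff_norm_eq_one, QuadraticAlgebra.norm_natCast]
    exact_mod_cast (Nat.one_lt_pow two_ne_zero hp.one_lt).ne'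
  obtain ⟨a, b, hab, ha, hb⟩ : ∃ a b, (p : ℤ[ω]) = a * b ∧ ¬ IsUnit a ∧ ¬ IsUnit b := by
    simpa [irreducible_iff, hunit] using hirr
  rw [isUnit_iff_norm_eq_one] at ha hb
  lift a.norm to ℕ using norm_nonneg a with k hk
  lift b.norm to ℕ using norm_nonneg b with l hl
  have hkl : k * l = p ^ 2 := by
    have := congrArg QuadraticAlgebra.norm hab
    rw [map_mul, QuadraticAlgebra.norm_natCast, ← hk, ← hl] at this
    exact_mod_cast this.symm
  obtain ⟨i, hi, rfl⟩ := (Nat.dvd_prime_pow hp).1 (Dvd.intro l hkl)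
  interval_cases i
  · simp at ha
  · exact ⟨a, by simp [← hk]⟩
  · rw [mul_eq_left₀ (pow_ne_zero 2 hp.ne_zero)] at hkl
    simp [hkl] at hb

theorem exists_norm_eq_of_mod_three_eq_one {p : ℕ} (hp : p.Prime) (hp3 : p % 3 = 1) :
    ∃ π : ℤ[ω], π.norm = p := by
  obtain ⟨t, ht⟩ := hp.exists_dvd_sq_add_self_add_one hp3
  refine exists_norm_eq_of_not_irreducible hp fun hirr => ?_
  -- `p` divides `(t - ω) * (t - star ω) = t ^ 2 + t + 1` but neither factor
  have hdvd : (p : ℤ[ω]) ∣ ⟨t, -1⟩ * star ⟨t, -1⟩ := by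
    rw [mul_star_eq_norm, norm_def]
    exact Int.cast_dvd_cast _ _ (ht.trans (dvd_of_eq (by ring)))
  have hp1 : ¬ (p : ℤ) ∣ 1 := fun h =>
    hp.ne_one (by exact_mod_cast Int.eq_one_of_dvd_one (by positivity) h)
  rcases hirr.prime.dvd_mul.1 hdvd with h | h <;>
    rw [← Int.cast_natCast, intCast_dvd_iff] at h <;> exact hp1 (by simpa using h.2)

theorem not_star_dvd_self {π : ℤ[ω]} {p : ℕ} (hp : p.Prime) (hp3 : p % 3 = 1)
    (hπ : π.norm = p) : ¬ star π ∣ π := by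
  intro h
  have hpZ := Nat.prime_iff_prime_int.mp hp
  -- `star π` divides the trace `π + star π = 2 π.re - π.im`, so `p` divides it
  have htr : star π ∣ ((2 * π.re - π.im : ℤ) : ℤ[ω]) := by
    convert dvd_add h (dvd_refl (star π)) using 1
    ext <;> simp
    ring
  have ht : (p : ℤ) ∣ 2 * π.re - π.im := by
    have := map_dvd QuadraticAlgebra.norm htr
    rw [QuadraticAlgebra.norm_star, norm_intCast, hπ] at this
    exact hpZ.dvd_of_dvd_pow this
  -- then `p ∣ 3 π.im ^ 2 = 4 p - (2 π.re - π.im) ^ 2`, so `p ∣ π.im` and `p ^ 2 ∣ 4 p`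
  have h4 := four_mul_norm π
  rw [hπ] at h4
  have him : (p : ℤ) ∣ π.im := by
    have h3 : (p : ℤ) ∣ 3 * π.im ^ 2 := by
      rw [show 3 * π.im ^ 2 = 4 * p - (2 * π.re - π.im) ^ 2 by linarith]
      exact dvd_sub (dvd_mul_left _ _) (dvd_pow ht two_ne_zero)
    rcases hpZ.dvd_mul.1 h3 with h3 | h3
    · have := Int.le_of_dvd (by norm_num) h3
      have := hp.one_lt
      omega
    · exact hpZ.dvd_of_dvd_pow h3
  have h4p : (p : ℤ) * p ∣ 4 * p := by
    rw [h4, ← sq]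
    exact dvd_add (pow_dvd_pow_of_dvd ht 2) (dvd_mul_of_dvd_right (pow_dvd_pow_of_dvd him 2) 3)
  have : p ∣ 2 ^ 2 := by
    exact_mod_cast (mul_dvd_mul_iff_right (by exact_mod_cast hp.ne_zero)).1 h4p
  have := (Nat.prime_dvd_prime_iff_eq hp Nat.prime_two).1 (hp.dvd_of_dvd_pow this)
  omega

def IsPrimitive (z : ℤ[ω]) : Prop := IsCoprime z.re z.im

theorem isPrimitive_iff {z : ℤ[ω]} : IsPrimitive z ↔ ∀ n : ℤ, (n : ℤ[ω]) ∣ z → IsUnit n := by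
  simp only [IsPrimitive, ← isRelPrime_iff_isCoprime, IsRelPrime, intCast_dvd_iff, and_imp]

theorem IsPrimitive.of_mul_left {δ z : ℤ[ω]} (h : IsPrimitive (δ * z)) : IsPrimitive z :=
  isPrimitive_iff.2 fun n hn => isPrimitive_iff.1 h n (dvd_mul_of_dvd_right hn δ)

theorem isPrimitive_mul_iff {u z : ℤ[ω]} (hu : IsUnit u) :
    IsPrimitive (u * z) ↔ IsPrimitive z := by
  obtain ⟨u, rfl⟩ := hu
  refine ⟨IsPrimitive.of_mul_left, fun h => ?_⟩
  rw [← u.inv_mul_cancel_left z] at h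
  exact h.of_mul_left

theorem IsPrimitive.not_two_dvd_and {z : ℤ[ω]} (h : IsPrimitive z) : ¬ (2 ∣ z.re ∧ 2 ∣ z.im) :=
  fun h2 => Int.isUnit_iff.not.2 (by norm_num) (h.isUnit_of_dvd' h2.1 h2.2)

theorem IsPrimitive.mul {π z : ℤ[ω]} {p : ℕ} (hp : p.Prime) (hπ : π.norm = p)
    (hz : IsPrimitive z) (hπz : ¬ star π ∣ z) : IsPrimitive (π * z) := by
  rw [isPrimitive_iff] at hz ⊢
  intro n hn
  have hpπ : ((p : ℤ) : ℤ[ω]) = π * star π := by rw [mul_star_eq_norm, hπ]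
  by_cases hpn : (p : ℤ) ∣ n
  · refine absurd ((mul_dvd_mul_iff_left (ne_zero_of_norm_eq_prime hp hπ)).1 ?_) hπz
    exact hpπ ▸ (Int.cast_dvd_cast _ _ hpn).trans hn
  · -- `n` is coprime to `p` and divides `star π * (π * z) = p * z`
    have hcop := ((Nat.prime_iff_prime_int.mp hp).coprime_iff_not_dvd.2 hpn).symm.map
      (Int.castRingHom ℤ[ω])
    refine hz n (hcop.dvd_of_dvd_mul_left ?_)
    rw [eq_intCast, eq_intCast, hpπ, mul_comm π, mul_assoc]
    exact dvd_mul_of_dvd_right hn _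

def primitivesOfNorm (m : ℕ) : Set ℤ[ω] := {z | IsPrimitive z ∧ z.norm = m}

theorem finite_setOf_norm_eq (n : ℤ) : {z : ℤ[ω] | z.norm = n}.Finite := by
  refine ((Set.finite_Icc (-4 * n) (4 * n)).prod (Set.finite_Icc (-4 * n) (4 * n))).preimage
    (f := fun z : ℤ[ω] => (z.re, z.im)) (fun z _ w _ h => ?_) |>.subset fun z hz => ?_
  · simpa [QuadraticAlgebra.ext_iff] using h
  · have h := four_mul_norm z
    rw [hz] at h
    have := Int.le_self_sq (2 * z.re - z.im)
    have := Int.le_self_sq (z.im - 2 * z.re)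
    have := Int.le_self_sq z.im
    have := Int.le_self_sq (-z.im)
    simp only [Set.mem_preimage, Set.mem_prod, Set.mem_Icc]
    refine ⟨⟨?_, ?_⟩, ⟨?_, ?_⟩⟩ <;> nlinarith

theorem finite_primitivesOfNorm (m : ℕ) : (primitivesOfNorm m).Finite :=
  (finite_setOf_norm_eq m).subset fun _ hz => hz.2

theorem ncard_primitivesOfNorm_one : (primitivesOfNorm 1).ncard = 6 := by
  have h : primitivesOfNorm 1 = (fun xy : ℤ × ℤ => (⟨xy.1, xy.2⟩ : ℤ[ω])) ''
      ({(1, 0), (-1, 0), (0, 1), (0, -1), (1, 1), (-1, -1)} : Finset (ℤ × ℤ)) := by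
    ext ⟨a, b⟩
    simp only [primitivesOfNorm, IsPrimitive, norm_def, Set.mem_ofPred_eq, Set.mem_image,
      Finset.coe_insert, Finset.coe_singleton, Set.mem_insert_iff, Set.mem_singleton_iff,
      QuadraticAlgebra.mk.injEq, Prod.exists, Prod.mk.injEq, Nat.cast_one]
    constructor
    · rintro ⟨-, hab⟩
      have h4 : (2 * a - b) ^ 2 + 3 * b ^ 2 = 4 := by linear_combination 4 * hab
      have := sq_nonneg (2 * a - b)
      have hb1 : -1 ≤ b := by nlinarith
      have hb2 : b ≤ 1 := by nlinarith
      have ha1 : -1 ≤ a := by nlinarith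
      have ha2 : a ≤ 1 := by nlinarith
      interval_cases a <;> interval_cases b <;> simp_all
    · rintro ⟨x, y, hxy, rfl, rfl⟩
      rcases hxy with ⟨rfl, rfl⟩ | ⟨rfl, rfl⟩ | ⟨rfl, rfl⟩ | ⟨rfl, rfl⟩ | ⟨rfl, rfl⟩ | ⟨rfl, rfl⟩ <;>
        simp [isCoprime_one_left, isCoprime_one_right, IsCoprime.neg_left_iff,
          IsCoprime.neg_right_iff]
  rw [h, Set.ncard_image_of_injective _ fun x y h => by
    simpa [QuadraticAlgebra.ext_iff, Prod.ext_iff] using h, Set.ncard_coe_finset]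
  rfl

section SplitPrime

variable {p : ℕ} {π : ℤ[ω]}

theorem dvd_or_star_dvd_of_dvd_norm (hp : p.Prime) (hπ : π.norm = p) {z : ℤ[ω]}
    (hz : (p : ℤ) ∣ z.norm) : π ∣ z ∨ star π ∣ z := by
  have h : π ∣ z * star z := by
    rw [mul_star_eq_norm]
    exact (dvd_mul_right π (star π)).trans (mul_star_eq_norm π ▸ hπ ▸ Int.cast_dvd_cast _ _ hz)
  refine (prime_of_norm_eq_prime hp hπ).dvd_or_dvd h |>.imp id fun h => ?_
  simpa using star_dvd_star h

theorem not_dvd_and_star_dvd (hp : p.Prime) (hp3 : p % 3 = 1) (hπ : π.norm = p) {z : ℤ[ω]}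
    (hz : IsPrimitive z) : ¬ (π ∣ z ∧ star π ∣ z) := by
  rintro ⟨⟨w, rfl⟩, h⟩
  have hπ' : Prime (star π) :=
    prime_of_norm_eq_prime hp (by rw [QuadraticAlgebra.norm_star, hπ])
  rcases hπ'.dvd_or_dvd h with h | ⟨v, rfl⟩
  · exact not_star_dvd_self hp hp3 hπ h
  · have hpz : ((p : ℤ) : ℤ[ω]) ∣ π * (star π * v) :=
      ⟨v, by rw [← mul_assoc, mul_star_eq_norm, hπ]⟩
    exact Int.isUnit_iff.not.2 (by have := hp.two_le; omega) (isPrimitive_iff.1 hz _ hpz)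

theorem image_mul_primitivesOfNorm (hp : p.Prime) (hp3 : p % 3 = 1) (hπ : π.norm = p)
    (m : ℕ) : (π * ·) '' {z ∈ primitivesOfNorm m | ¬ star π ∣ z} =
      {z ∈ primitivesOfNorm (p * m) | π ∣ z} := by
  ext z
  constructor
  · rintro ⟨w, ⟨⟨hw, hwm⟩, hπw⟩, rfl⟩
    refine ⟨⟨hw.mul hp hπ hπw, ?_⟩, dvd_mul_right π w⟩
    rw [map_mul, hπ, hwm]
    push_cast
    rfl
  · rintro ⟨⟨hz, hzm⟩, ⟨w, rfl⟩⟩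
    refine ⟨w, ⟨⟨hz.of_mul_left, ?_⟩, fun h => ?_⟩, rfl⟩
    · rw [map_mul, hπ] at hzm
      push_cast at hzm
      exact mul_left_cancel₀ (by exact_mod_cast hp.ne_zero) hzm
    · exact not_dvd_and_star_dvd hp hp3 hπ hz ⟨dvd_mul_right π w, dvd_mul_of_dvd_right h π⟩

theorem ncard_sep_dvd_primitivesOfNorm (hp : p.Prime) (hp3 : p % 3 = 1) (hπ : π.norm = p)
    (m : ℕ) : {z ∈ primitivesOfNorm (p * m) | π ∣ z}.ncard =
      {z ∈ primitivesOfNorm m | ¬ star π ∣ z}.ncard := by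
  rw [← image_mul_primitivesOfNorm hp hp3 hπ,
    Set.ncard_image_of_injective _ (mul_right_injective₀ (ne_zero_of_norm_eq_prime hp hπ))]

theorem sep_not_dvd_primitivesOfNorm (hp : p.Prime) (hp3 : p % 3 = 1) (hπ : π.norm = p)
    {m : ℕ} (hpm : p ∣ m) :
    {z ∈ primitivesOfNorm m | ¬ π ∣ z} = {z ∈ primitivesOfNorm m | star π ∣ z} := by
  ext z
  simp only [Set.mem_ofPred_eq, and_congr_right_iff]
  intro hz
  have := dvd_or_star_dvd_of_dvd_norm hp hπ (hz.2 ▸ Int.natCast_dvd_natCast.2 hpm)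
  have := not_dvd_and_star_dvd hp hp3 hπ hz.1
  tauto

theorem ncard_primitivesOfNorm_prime_mul (hp : p.Prime) (hp3 : p % 3 = 1) (hπ : π.norm = p)
    (m : ℕ) : (primitivesOfNorm (p * m)).ncard =
      {z ∈ primitivesOfNorm m | ¬ star π ∣ z}.ncard +
        {z ∈ primitivesOfNorm m | ¬ π ∣ z}.ncard := by
  have hπ' : (star π).norm = p := by rw [QuadraticAlgebra.norm_star, hπ]
  rw [← Set.ncard_sep_add_ncard_sep_not (finite_primitivesOfNorm _) (π ∣ ·),
    sep_not_dvd_primitivesOfNorm hp hp3 hπ (dvd_mul_right p m),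
    ncard_sep_dvd_primitivesOfNorm hp hp3 hπ, ncard_sep_dvd_primitivesOfNorm hp hp3 hπ',
    star_star]

end SplitPrime

theorem ncard_primitivesOfNorm_prime_mul_of_dvd {p m : ℕ} (hp : p.Prime) (hp3 : p % 3 = 1)
    (hpm : p ∣ m) : (primitivesOfNorm (p * m)).ncard = (primitivesOfNorm m).ncard := by
  obtain ⟨π, hπ⟩ := exists_norm_eq_of_mod_three_eq_one hp hp3
  have hπ' : (star π).norm = p := by rw [QuadraticAlgebra.norm_star, hπ]
  have := sep_not_dvd_primitivesOfNorm hp hp3 hπ' hpm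
  rw [star_star] at this
  rw [ncard_primitivesOfNorm_prime_mul hp hp3 hπ, this,
    Set.ncard_sep_add_ncard_sep_not (finite_primitivesOfNorm _)]

theorem ncard_primitivesOfNorm_prime_mul_of_not_dvd {p m : ℕ} (hp : p.Prime) (hp3 : p % 3 = 1)
    (hpm : ¬ p ∣ m) : (primitivesOfNorm (p * m)).ncard = 2 * (primitivesOfNorm m).ncard := by
  obtain ⟨π, hπ⟩ := exists_norm_eq_of_mod_three_eq_one hp hp3
  have hsep {σ : ℤ[ω]} (hσ : σ.norm = p) :
      {z ∈ primitivesOfNorm m | ¬ σ ∣ z} = primitivesOfNorm m :=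
    Set.sep_eq_self_iff_mem_true.2 fun z hz hσz => hpm <| by
      exact_mod_cast hσ ▸ hz.2 ▸ map_dvd QuadraticAlgebra.norm hσz
  rw [ncard_primitivesOfNorm_prime_mul hp hp3 hπ, hsep hπ,
    hsep (by rw [QuadraticAlgebra.norm_star, hπ]), two_mul]

theorem ncard_primitivesOfNorm {m : ℕ} (hm : 0 < m)
    (hsplit : ∀ p : ℕ, p.Prime → p ∣ m → p % 3 = 1) :
    (primitivesOfNorm m).ncard = 6 * 2 ^ m.primeFactors.card := by
  induction m using induction_on_primes with
  | zero => exact absurd hm (lt_irrefl 0)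
  | one => simp [ncard_primitivesOfNorm_one]
  | prime_mul p m hp ih =>
    have hm0 : m ≠ 0 := by rintro rfl; simp at hm
    have hp3 := hsplit p hp (dvd_mul_right p m)
    have ih := ih (Nat.pos_of_ne_zero hm0) fun q hq hqm =>
      hsplit q hq (dvd_mul_of_dvd_right hqm p)
    rw [Nat.card_primeFactors_prime_mul hp hm0]
    split_ifs with hpm
    · rw [ncard_primitivesOfNorm_prime_mul_of_dvd hp hp3 hpm, ih]
    · rw [ncard_primitivesOfNorm_prime_mul_of_not_dvd hp hp3 hpm, ih]
      ring

theorem omega_mul_omega_mul_omega_mul (z : ℤ[ω]) : ω * (ω * (ω * z)) = z := by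
  ext <;> simp

theorem isUnit_omega : IsUnit (ω : ℤ[ω]) := by
  rw [isUnit_iff_norm_eq_one, norm_def]
  simp

theorem omega_mul_mem_primitivesOfNorm_iff {m : ℕ} {z : ℤ[ω]} :
    ω * z ∈ primitivesOfNorm m ↔ z ∈ primitivesOfNorm m := by
  simp only [primitivesOfNorm, Set.mem_ofPred_eq, isPrimitive_mul_iff isUnit_omega, map_mul,
    isUnit_iff_norm_eq_one.1 isUnit_omega, one_mul]

theorem image_omega_mul_sep_primitivesOfNorm {m : ℕ} {P Q : ℤ[ω] → Prop}
    (h : ∀ z, Q (ω * z) ↔ P z) :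
    (ω * ·) '' {z ∈ primitivesOfNorm m | P z} = {z ∈ primitivesOfNorm m | Q z} := by
  rw [Set.image_eq_preimage_of_inverse (f := (ω * ·)) (g := fun z => ω * (ω * z))
    omega_mul_omega_mul_omega_mul omega_mul_omega_mul_omega_mul]
  ext z
  simp only [Set.mem_preimage, Set.mem_ofPred_eq, omega_mul_mem_primitivesOfNorm_iff, ← h,
    omega_mul_omega_mul_omega_mul]

theorem ncard_primitivesOfNorm_eq_three_mul (m : ℕ) :
    (primitivesOfNorm m).ncard = 3 * {z ∈ primitivesOfNorm m | 2 ∣ z.im}.ncard := by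
  -- exactly one of `z.im`, `z.re`, `z.re - z.im` is even, and multiplication by `ω` maps each
  -- of these classes onto the next
  have hA := image_omega_mul_sep_primitivesOfNorm (m := m) (P := fun z => 2 ∣ z.im)
    (Q := fun z => 2 ∣ z.re) fun z => by simp
  have hB := image_omega_mul_sep_primitivesOfNorm (m := m) (P := fun z => 2 ∣ z.re)
    (Q := fun z => 2 ∣ z.re - z.im) fun z => by simp
  have hunion : primitivesOfNorm m = {z ∈ primitivesOfNorm m | 2 ∣ z.im} ∪
      {z ∈ primitivesOfNorm m | 2 ∣ z.re} ∪ {z ∈ primitivesOfNorm m | 2 ∣ z.re - z.im} := by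
    ext z
    simp only [Set.mem_union, Set.mem_ofPred_eq]
    refine ⟨fun hz => ?_, by rintro ((h | h) | h) <;> exact h.1⟩
    have := hz.1.not_two_dvd_and
    have : 2 ∣ z.im ∨ 2 ∣ z.re ∨ 2 ∣ z.re - z.im := by omega
    tauto
  have hfin (P : ℤ[ω] → Prop) : {z ∈ primitivesOfNorm m | P z}.Finite :=
    (finite_primitivesOfNorm m).subset (Set.sep_subset _ _)
  have hinj (s : Set ℤ[ω]) : ((ω * ·) '' s).ncard = s.ncard :=
    Set.ncard_image_of_injective s (mul_right_injective₀ isUnit_omega.ne_zero)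
  have hdisj {P Q : ℤ[ω] → Prop} (h : ∀ z, P z → Q z → 2 ∣ z.re ∧ 2 ∣ z.im) :
      Disjoint {z ∈ primitivesOfNorm m | P z} {z ∈ primitivesOfNorm m | Q z} :=
    Set.disjoint_left.2 fun z hP hQ => hP.1.1.not_two_dvd_and (h z hP.2 hQ.2)
  conv_lhs => rw [hunion]
  rw [Set.ncard_union_eq (Set.disjoint_union_left.2 ⟨hdisj fun z h1 h2 => ⟨by omega, h1⟩,
      hdisj fun z h1 h2 => ⟨h1, by omega⟩⟩) ((hfin _).union (hfin _)) (hfin _),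
    Set.ncard_union_eq (hdisj fun z h1 h2 => ⟨h2, h1⟩) (hfin _) (hfin _), ← hB, hinj, ← hA,
    hinj]
  ring

theorem image_mk_add_two_mul_two_mul {m : ℕ} (hm : m % 4 = 3) :
    (fun xy : ℤ × ℤ => (⟨xy.1 + 2 * xy.2, 2 * xy.1⟩ : ℤ[ω])) ''
      {xy : ℤ × ℤ | IsCoprime xy.1 xy.2 ∧ (m : ℤ) = 3 * xy.1 ^ 2 + 4 * xy.2 ^ 2} =
      {z ∈ primitivesOfNorm m | 2 ∣ z.im} := by
  ext z
  constructor
  · rintro ⟨⟨x, y⟩, ⟨hxy, hxym⟩, rfl⟩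
    have hx : Odd x := by
      refine Int.not_even_iff_odd.1 fun ⟨k, hk⟩ => ?_
      have : (2 : ℤ) ∣ m := ⟨6 * k ^ 2 + 2 * y ^ 2, by rw [hxym, hk]; ring⟩
      omega
    refine ⟨⟨(Int.isCoprime_add_two_mul_two_mul_iff hx).2 hxy, ?_⟩, ⟨x, rfl⟩⟩
    rw [norm_def, hxym]
    ring
  · rintro ⟨⟨hz, hzm⟩, x, hx⟩
    rw [norm_def, hx] at hzm
    obtain ⟨s, hs⟩ : ∃ s, z.re = 2 * s + 1 := by
      have := hz.not_two_dvd_and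
      rw [hx] at this
      exact ⟨z.re / 2, by omega⟩
    -- `x` is odd, since otherwise `m ≡ z.re ^ 2 ≡ 1 (mod 4)`
    have hxodd : ¬ 2 ∣ x := fun ⟨t, ht⟩ => by
      have : (4 : ℤ) ∣ m - 1 := ⟨s * s + s - 2 * s * t - t + 4 * t * t, by
        rw [← hzm, hs, ht]; ring⟩
      omega
    obtain ⟨y, hy⟩ : ∃ y, z.re = x + 2 * y := ⟨(z.re - x) / 2, by omega⟩
    refine ⟨(x, y), ⟨?_, ?_⟩, ?_⟩
    · rw [← Int.isCoprime_add_two_mul_two_mul_iff (Int.odd_iff.2 (by omega)), ← hy, ← hx]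
      exact hz
    · rw [← hzm, hy]
      ring
    · ext
      · exact hy.symm
      · exact hx.symm

end EisensteinInt

open EisensteinInt in
theorem stmt_7_general (m : ℕ) (h7 : m % 12 = 7)
    (hdiv : ∀ p : ℕ, p.Prime → p ∣ m → p % 12 = 1 ∨ p % 12 = 7) :
    {xy : ℤ × ℤ | IsCoprime xy.1 xy.2 ∧
        (m : ℤ) = 3 * xy.1 ^ 2 + 4 * xy.2 ^ 2}.ncard =
      2 ^ (m.primeFactors.card + 1) := by
  have hinj : Function.Injective fun xy : ℤ × ℤ => (⟨xy.1 + 2 * xy.2, 2 * xy.1⟩ : ℤ[ω]) := by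
    rintro ⟨x, y⟩ ⟨x', y'⟩ h
    simp only [QuadraticAlgebra.mk.injEq] at h
    ext <;> omega
  rw [← Set.ncard_image_of_injective _ hinj, image_mk_add_two_mul_two_mul (by omega)]
  have h3 := ncard_primitivesOfNorm_eq_three_mul m
  rw [ncard_primitivesOfNorm (by omega) fun p hp hpm => by
    rcases hdiv p hp hpm with h | h <;> omega] at h3
  rw [pow_succ]
  omega

theorem stmt_7 (m : ℕ) (hm : 0 < m) (h7 : m % 12 = 7)
    (hdiv : ∀ p : ℕ, p.Prime → p ∣ m → p % 12 = 1 ∨ p % 12 = 7) :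
    {xy : ℤ × ℤ | IsCoprime xy.1 xy.2 ∧
        (m : ℤ) = 3 * xy.1 ^ 2 + 4 * xy.2 ^ 2}.ncard =
      2 ^ (m.primeFactors.card + 1) :=
  stmt_7_general m h7 hdiv
end

section
/- Let N = 4m where m ≡ 7 (mod 12) is a positive integer all of whose prime divisors are congruent to 1 or 7 mod 12. Then the map (q,r) ↦ (4r, q) gives a bijection between proper representations m = 3q² + 4r² and proper representations N = p² + 12q² with 4 | p. -/
theorem stmt_8 (m N : ℕ) (hN : N = 4 * m) (hm : 0 < m) (h7 : m % 12 = 7)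
    (hdiv : ∀ p : ℕ, p.Prime → p ∣ m → p % 12 = 1 ∨ p % 12 = 7) :
    Set.BijOn (fun qr : ℤ × ℤ => (4 * qr.2, qr.1))
      {qr : ℤ × ℤ | IsCoprime qr.1 qr.2 ∧ (m : ℤ) = 3 * qr.1 ^ 2 + 4 * qr.2 ^ 2}
      {pq : ℤ × ℤ | IsCoprime pq.1 pq.2 ∧ (N : ℤ) = pq.1 ^ 2 + 12 * pq.2 ^ 2 ∧
        4 ∣ pq.1} := by
  have hmodd : ¬ (2 : ℤ) ∣ (m : ℤ) := by
    intro h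
    have := Int.natCast_dvd_natCast.mp (by exact_mod_cast h : ((2:ℕ):ℤ) ∣ (m:ℤ))
    omega
  refine ⟨?_, ?_, ?_⟩
  · rintro ⟨q, r⟩ ⟨hco, heq⟩
    have hq2 : ¬ (2 : ℤ) ∣ q := by
      intro ⟨k, hk⟩
      apply hmodd
      exact ⟨3 * 2 * k ^ 2 + 2 * r ^ 2, by rw [heq, hk]; ring⟩
    have h2q : IsCoprime (2 : ℤ) q := (Int.prime_two.coprime_iff_not_dvd).mpr hq2
    constructor
    · have : IsCoprime ((2 * 2) * r) q := (h2q.mul_left h2q).mul_left (hco.symm)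
      simpa [show ((2:ℤ) * 2) = 4 by norm_num] using this
    refine ⟨?_, ⟨r, rfl⟩⟩
    push_cast [hN]
    linear_combination (4 : ℤ) * heq
  · rintro ⟨q, r⟩ - ⟨q', r'⟩ - h
    simp only [Prod.mk.injEq] at h
    obtain ⟨h1, h2⟩ := h
    have : r = r' := by linarith
    simp [this, h2]
  · rintro ⟨p, q⟩ ⟨hco, heq, ⟨r, hr⟩⟩
    refine ⟨(q, r), ⟨?_, ?_⟩, ?_⟩
    · have : IsCoprime (4 * r) q := hr ▸ hco
      exact (this.of_mul_left_right).symm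
    · have h4 : (4 : ℤ) * (m : ℤ) = 4 * (3 * q ^ 2 + 4 * r ^ 2) := by
        have : (N : ℤ) = 4 * m := by exact_mod_cast hN
        rw [this, hr] at heq
        linear_combination heq
      exact mul_left_cancel₀ (by norm_num : (4:ℤ) ≠ 0) h4
    · simp [hr.symm]
end

section
/- For every positive integer n, there exist n pairwise distinct pairs of integers (p₁,q₁), ..., (pₙ,qₙ) such that p_i² + 12q_i² = p_j² + 12q_j² for all i, j, where each p_i and q_i are coprime, 4 divides each p_i, and 3 does not divide any p_i. -/
/-!
Call `z ∈ ℤ[√d]` primitive when `z.re` and `z.im` are coprime. A rational integer `g` dividing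
`z * w` divides `z * N(w)` and `N(z) * w`, hence `N(w)` and `N(z)` when `z` and `w` are primitive;
so a product of primitive elements with pairwise coprime norms is primitive.

Now take `π_k = 1 + 2 c_k √-3`, where `c_0 = 7` and `c_{k+1} = c_k (1 + 12 c_k²)`: every norm
`N(π_k) = 1 + 12 c_k²` is `≡ 1` modulo `7` and modulo every earlier norm, which divides `c_k`.
For `i < n` put `β_i = (2 + √-3) · π̄_i · ∏_{j < n, j ≠ i} π_j`. All `β_i` are primitive of
norm `7 ∏ N(π_j)`, and `β_i = β_k` would give `π̄_i π_k = π̄_k π_i`, i.e. `π̄_i π_k` real,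
i.e. `c_i = c_k`. The pairs are `(2 Re β_i, Im β_i)`, since `(2x)² + 12y² = 4 N(x + y√-3)`;
the factor `2 + √-3` makes `Re β_i` even, `Im β_i` odd and `Re β_i` prime to `3`, because the
product of the `π`'s has real part `≡ 1 mod 6` and even imaginary part.
-/

open Finset

namespace Zsqrtd

variable {d : ℤ}

theorem norm_prod {ι : Type*} (s : Finset ι) (f : ι → ℤ√d) :
    (∏ i ∈ s, f i).norm = ∏ i ∈ s, (f i).norm :=
  map_prod normMonoidHom f s

theorem mul_left_cancel_of_norm_ne_zero {a b c : ℤ√d} (ha : a.norm ≠ 0) (h : a * b = a * c) :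
    b = c :=
  Zsqrtd.eq_of_smul_eq_smul_left ha <| by
    rw [norm_eq_mul_conj]
    linear_combination star a * h

theorem isCoprime_re_im_star {z : ℤ√d} (hz : IsCoprime z.re z.im) :
    IsCoprime (star z).re (star z).im := by
  rw [re_star, im_star]
  exact hz.neg_right

theorem dvd_of_intCast_dvd_mul {g m : ℤ} {z : ℤ√d} (hz : IsCoprime z.re z.im)
    (h : (g : ℤ√d) ∣ m * z) : g ∣ m := by
  rw [intCast_dvd, re_smul, im_smul] at h
  obtain ⟨u, v, huv⟩ := hz
  have hm : m = u * (m * z.re) + v * (m * z.im) := by linear_combination -m * huv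
  rw [hm]
  exact dvd_add (h.1.mul_left u) (h.2.mul_left v)

theorem isCoprime_re_im_mul {z w : ℤ√d} (hz : IsCoprime z.re z.im) (hw : IsCoprime w.re w.im)
    (hzw : IsCoprime z.norm w.norm) : IsCoprime (z * w).re (z * w).im := by
  refine IsRelPrime.isCoprime fun g hre him => ?_
  have hg : (g : ℤ√d) ∣ z * w := (intCast_dvd _ _).2 ⟨hre, him⟩
  have hz' : (z.norm : ℤ√d) * w = star z * (z * w) := by rw [norm_eq_mul_conj]; ring
  have hw' : (w.norm : ℤ√d) * z = star w * (z * w) := by rw [norm_eq_mul_conj]; ring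
  exact hzw.isUnit_of_dvd' (dvd_of_intCast_dvd_mul hw (hz' ▸ hg.mul_left _))
    (dvd_of_intCast_dvd_mul hz (hw' ▸ hg.mul_left _))

theorem isCoprime_re_im_prod {ι : Type*} {s : Finset ι} {f : ι → ℤ√d}
    (hf : ∀ i ∈ s, IsCoprime (f i).re (f i).im)
    (hs : (s : Set ι).Pairwise fun i j => IsCoprime (f i).norm (f j).norm) :
    IsCoprime (∏ i ∈ s, f i).re (∏ i ∈ s, f i).im := by
  classical
  induction s using Finset.induction_on with
  | empty => simpa using isCoprime_one_left
  | insert a s ha ih =>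
    rw [coe_insert, Set.pairwise_insert_of_notMem (mod_cast ha)] at hs
    rw [prod_insert ha]
    refine isCoprime_re_im_mul (hf a (mem_insert_self a s))
      (ih (fun i hi => hf i (mem_insert_of_mem hi)) hs.1) ?_
    rw [norm_prod]
    exact IsCoprime.prod_right fun i hi => (hs.2 i hi).1

end Zsqrtd

namespace PrimitiveReps

open Zsqrtd

def coprimeSeq : ℕ → ℤ
  | 0 => 7
  | k + 1 => coprimeSeq k * (1 + 12 * coprimeSeq k ^ 2)

theorem coprimeSeq_pos (k : ℕ) : 0 < coprimeSeq k := by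
  induction k with
  | zero => norm_num [coprimeSeq]
  | succ k ih => rw [coprimeSeq]; positivity

theorem coprimeSeq_strictMono : StrictMono coprimeSeq :=
  strictMono_nat_of_lt_succ fun k => by
    have := coprimeSeq_pos k
    rw [coprimeSeq]
    nlinarith

theorem coprimeSeq_dvd {j k : ℕ} (h : j ≤ k) : coprimeSeq j ∣ coprimeSeq k := by
  induction k, h using Nat.le_induction with
  | base => rfl
  | succ k _ ih => rw [coprimeSeq]; exact ih.mul_right _

theorem isCoprime_one_add_twelve_mul_sq {c m : ℤ} (h : m ∣ c) : IsCoprime (1 + 12 * c ^ 2) m :=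
  IsCoprime.of_isCoprime_of_dvd_right ⟨1, -12 * c, by ring⟩ h

def factor (k : ℕ) : ℤ√(-3) := ⟨1, 2 * coprimeSeq k⟩

theorem norm_factor (k : ℕ) : (factor k).norm = 1 + 12 * coprimeSeq k ^ 2 := by
  rw [norm_def, factor]
  ring

theorem norm_factor_pos (k : ℕ) : 0 < (factor k).norm := by
  rw [norm_factor]
  positivity

theorem isCoprime_re_im_factor (k : ℕ) : IsCoprime (factor k).re (factor k).im :=
  isCoprime_one_left

theorem isCoprime_seven_norm_factor (k : ℕ) : IsCoprime 7 (factor k).norm := by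
  rw [norm_factor]
  exact (isCoprime_one_add_twelve_mul_sq (coprimeSeq_dvd k.zero_le)).symm

theorem pairwise_isCoprime_norm_factor :
    Pairwise fun j k => IsCoprime (factor j).norm (factor k).norm := by
  have key : ∀ {j k : ℕ}, j < k → IsCoprime (factor j).norm (factor k).norm := fun {j k} h => by
    have hdvd : (factor j).norm ∣ coprimeSeq k :=
      (Dvd.intro_left _ (by rw [norm_factor]; rfl)).trans (coprimeSeq_dvd h)
    rw [norm_factor k]
    exact (isCoprime_one_add_twelve_mul_sq hdvd).symm
  intro j k hjk
  rcases hjk.lt_or_gt with h | h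
  · exact key h
  · exact (key h).symm

def reOneModSixImEven : Submonoid (ℤ√(-3)) where
  carrier := {z | 6 ∣ z.re - 1 ∧ 2 ∣ z.im}
  one_mem' := by simp
  mul_mem' := by
    rintro x y ⟨⟨a, ha⟩, ⟨b, hb⟩⟩ ⟨⟨c, hc⟩, ⟨e, he⟩⟩
    rw [sub_eq_iff_eq_add] at ha hc
    exact ⟨⟨6 * a * c + a + c - 2 * b * e, by rw [re_mul, ha, hb, hc, he]; ring⟩,
      ⟨6 * a * e + e + 6 * b * c + b, by rw [im_mul, ha, hb, hc, he]; ring⟩⟩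

theorem factor_mem (k : ℕ) : factor k ∈ reOneModSixImEven := by
  simp [reOneModSixImEven, factor]

theorem star_factor_mem (k : ℕ) : star (factor k) ∈ reOneModSixImEven := by
  simp [reOneModSixImEven, factor]

def rep (n i : ℕ) : ℤ√(-3) := ⟨2, 1⟩ * (star (factor i) * ∏ j ∈ (range n).erase i, factor j)

theorem rep_mul_factor {n i : ℕ} (hi : i ∈ range n) :
    rep n i * factor i = ⟨2, 1⟩ * (∏ j ∈ range n, factor j) * star (factor i) := by
  rw [rep, ← mul_prod_erase _ _ hi]
  ring

theorem norm_rep {n i : ℕ} (hi : i ∈ range n) :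
    (rep n i).norm = 7 * ∏ j ∈ range n, (factor j).norm := by
  rw [rep, norm_mul, norm_mul, norm_conj, norm_prod, ← mul_prod_erase _ _ hi]
  rfl

theorem isCoprime_re_im_rep (n i : ℕ) : IsCoprime (rep n i).re (rep n i).im := by
  have hprod : IsCoprime (∏ j ∈ (range n).erase i, factor j).re
      (∏ j ∈ (range n).erase i, factor j).im :=
    isCoprime_re_im_prod (fun j _ => isCoprime_re_im_factor j)
      (pairwise_isCoprime_norm_factor.set_pairwise _)
  rw [rep, ← mul_assoc]
  refine isCoprime_re_im_mul (isCoprime_re_im_mul isCoprime_one_right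
    (isCoprime_re_im_star (isCoprime_re_im_factor i)) ?_) hprod ?_
  · rw [norm_conj]
    exact isCoprime_seven_norm_factor i
  · rw [norm_mul, norm_conj, norm_prod]
    exact IsCoprime.prod_right fun j hj => IsCoprime.mul_left (isCoprime_seven_norm_factor j)
      (pairwise_isCoprime_norm_factor (ne_of_mem_erase hj).symm)

theorem rep_injOn (n : ℕ) : Set.InjOn (rep n) (range n) := by
  intro i hi k hk h
  have key : star (factor i) * factor k = star (factor k) * factor i := by
    refine mul_left_cancel_of_norm_ne_zero (a := ⟨2, 1⟩ * ∏ j ∈ range n, factor j) ?_ ?_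
    · rw [norm_mul, norm_prod]
      exact mul_ne_zero (by decide) (prod_ne_zero_iff.2 fun j _ => (norm_factor_pos j).ne')
    · calc _ = rep n i * factor i * factor k := by rw [rep_mul_factor hi]; ring
        _ = rep n k * factor k * factor i := by rw [h]; ring
        _ = _ := by rw [rep_mul_factor hk]; ring
  have him := congrArg Zsqrtd.im key
  simp only [factor, im_mul, re_star, im_star] at him
  exact coprimeSeq_strictMono.injective (by linarith)

theorem rep_re_im_divisibility (n i : ℕ) :
    4 ∣ 2 * (rep n i).re ∧ ¬ 3 ∣ 2 * (rep n i).re ∧ Odd (rep n i).im := by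
  obtain ⟨⟨a, ha⟩, ⟨b, hb⟩⟩ : star (factor i) * ∏ j ∈ (range n).erase i, factor j ∈
      reOneModSixImEven :=
    mul_mem (star_factor_mem i) (prod_mem fun j _ => factor_mem j)
  simp only [rep, re_mul, im_mul] at ha hb ⊢
  exact ⟨by omega, by omega, Int.odd_iff.2 (by omega)⟩

theorem two_mul_re_sq_add_twelve_mul_im_sq (z : ℤ√(-3)) :
    (2 * z.re) ^ 2 + 12 * z.im ^ 2 = 4 * z.norm := by
  rw [norm_def]
  ring

end PrimitiveReps

open PrimitiveReps

theorem stmt_11_general (n : ℕ) :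
    ∃ f : Fin n → ℤ × ℤ, Function.Injective f ∧
      (∀ i j : Fin n,
        (f i).1 ^ 2 + 12 * (f i).2 ^ 2 = (f j).1 ^ 2 + 12 * (f j).2 ^ 2) ∧
      ∀ i : Fin n, IsCoprime (f i).1 (f i).2 ∧ 4 ∣ (f i).1 ∧ ¬ (3 ∣ (f i).1) := by
  have hi : ∀ i : Fin n, (i : ℕ) ∈ range n := fun i => mem_range.2 i.2
  refine ⟨fun i => (2 * (rep n i).re, (rep n i).im), fun i k h => ?_, fun i j => ?_, fun i => ?_⟩
  · simp only [Prod.mk.injEq] at h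
    exact Fin.ext (rep_injOn n (hi i) (hi k) (Zsqrtd.ext (mul_left_cancel₀ two_ne_zero h.1) h.2))
  · simp only [two_mul_re_sq_add_twelve_mul_im_sq, norm_rep (hi i), norm_rep (hi j)]
  · obtain ⟨h4, h3, hodd⟩ := rep_re_im_divisibility n i
    exact ⟨(Int.isCoprime_two_left.2 hodd).mul_left (isCoprime_re_im_rep n i), h4, h3⟩

theorem stmt_11 (n : ℕ) (hn : 0 < n) :
    ∃ f : Fin n → ℤ × ℤ, Function.Injective f ∧
      (∀ i j : Fin n,
        (f i).1 ^ 2 + 12 * (f i).2 ^ 2 = (f j).1 ^ 2 + 12 * (f j).2 ^ 2) ∧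
      ∀ i : Fin n, IsCoprime (f i).1 (f i).2 ∧ 4 ∣ (f i).1 ∧ ¬ (3 ∣ (f i).1) :=
  stmt_11_general n
end
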